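/- Let g₁ ≠ g₂ be vertices of G and h₁ ≠ h₂ be vertices of H. Then (g₂,h₂) does not lie in the geodetic closure I[{(g₁,h₁),(g₁,h₂),(g₂,h₁)}] in G ⊠ H. -/

import Mathlib

open SimpleGraph

/-- The strong product of two simple graphs. -/
def strongProd {α β : Type*} (G : SimpleGraph α) (H : SimpleGraph β) :
    SimpleGraph (α × β) where
  Adj x y := x ≠ y ∧ (x.1 = y.1 ∨ G.Adj x.1 y.1) ∧ (x.2 = y.2 ∨ H.Adj x.2 y.2)
  symm := by
    constructor; rintro x y ⟨hne, h1, h2⟩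
    exact ⟨hne.symm, h1.imp Eq.symm G.adj_symm, h2.imp Eq.symm H.adj_symm⟩
  loopless := by constructor; rintro x ⟨hne, -, -⟩; exact hne rfl

/-- The closed geodesic interval between two vertices. -/
def interval {V : Type*} (G : SimpleGraph V) (u v : V) : Set V :=
  {w | G.dist u w + G.dist w v = G.dist u v}

/-- The geodetic closure of a set of vertices. -/
def intervalSet {V : Type*} (G : SimpleGraph V) (S : Set V) : Set V :=
  ⋃ u ∈ S, ⋃ v ∈ S, interval G u v

/-- A set is geodetic if its geodetic closure is the whole vertex set. -/
def IsGeodetic {V : Type*} (G : SimpleGraph V) (S : Set V) : Prop :=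
  intervalSet G S = Set.univ

/-- A set is a hull set if iterating the interval operator yields everything. -/
def IsHullSet {V : Type*} (G : SimpleGraph V) (S : Set V) : Prop :=
  ∃ r : ℕ, (intervalSet G)^[r] S = Set.univ

/-- The geodetic number. -/
noncomputable def geodeticNumber {V : Type*} (G : SimpleGraph V) : ℕ :=
  sInf {n : ℕ | ∃ S : Set V, S.ncard = n ∧ IsGeodetic G S}

/-- The hull number. -/
noncomputable def hullNumber {V : Type*} (G : SimpleGraph V) : ℕ :=
  sInf {n : ℕ | ∃ S : Set V, S.ncard = n ∧ IsHullSet G S}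

/-- A vertex is simplicial if its neighborhood induces a complete graph. -/
def IsSimplicial {V : Type*} (G : SimpleGraph V) (v : V) : Prop :=
  ∀ ⦃a b : V⦄, G.Adj v a → G.Adj v b → a ≠ b → G.Adj a b

/-!
Distances in `G ⊠ H` are the maxima of the coordinate distances: a pair of walks can be run in
parallel, and projecting a walk to either factor never lengthens it. With `a = d(g₁, g₂) > 0` and
`b = d(h₁, h₂) > 0`, the vertex `(g₂, h₂)` lies at distances `max a b`, `a`, `b` from
`(g₁, h₁)`, `(g₁, h₂)`, `(g₂, h₁)`, whose pairwise distances are `b`, `a`, `max a b`. Every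
geodesic condition then fails: `max a b + a > b`, `max a b + b > a` and `a + b > max a b`.
-/

namespace SimpleGraph

variable {U V W : Type*}

def IsWeakHom (G : SimpleGraph V) (G' : SimpleGraph W) (f : V → W) : Prop :=
  ∀ ⦃x y⦄, G.Adj x y → f x = f y ∨ G'.Adj (f x) (f y)

namespace IsWeakHom

variable {G : SimpleGraph V} {G' : SimpleGraph W} {f : V → W}

theorem exists_walk_length_le (hf : IsWeakHom G G' f) {u v : V} (p : G.Walk u v) :
    ∃ q : G'.Walk (f u) (f v), q.length ≤ p.length := by
  induction p with
  | nil => exact ⟨.nil, le_rfl⟩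
  | cons hadj _ ih =>
    obtain ⟨q, hq⟩ := ih
    rcases hf hadj with heq | hadj'
    · exact ⟨q.copy heq.symm rfl, by simpa using hq.trans (Nat.le_succ _)⟩
    · exact ⟨.cons hadj' q, by simpa using hq⟩

theorem dist_le (hf : IsWeakHom G G' f) {u v : V} (h : G.Reachable u v) :
    G'.dist (f u) (f v) ≤ G.dist u v := by
  obtain ⟨p, hp⟩ := h.exists_walk_length_eq_dist
  obtain ⟨q, hq⟩ := hf.exists_walk_length_le p
  exact (SimpleGraph.dist_le q).trans (hq.trans hp.le)

end IsWeakHom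

variable {G : SimpleGraph U} {H : SimpleGraph V}

theorem isWeakHom_fst : IsWeakHom (strongProd G H) G Prod.fst :=
  fun _ _ hadj => hadj.2.1

theorem isWeakHom_snd : IsWeakHom (strongProd G H) H Prod.snd :=
  fun _ _ hadj => hadj.2.2

theorem isWeakHom_prodMk_right (h : V) : IsWeakHom G (strongProd G H) (·, h) :=
  fun _ _ hadj => .inr ⟨fun heq => hadj.ne (congrArg Prod.fst heq), .inr hadj, .inl rfl⟩

theorem isWeakHom_prodMk_left (g : U) : IsWeakHom H (strongProd G H) (g, ·) :=
  fun _ _ hadj => .inr ⟨fun heq => hadj.ne (congrArg Prod.snd heq), .inl rfl, .inr hadj⟩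

theorem exists_strongProd_walk_length_le_max {g g' : U} {h h' : V} (p : G.Walk g g')
    (q : H.Walk h h') :
    ∃ r : (strongProd G H).Walk (g, h) (g', h'), r.length ≤ max p.length q.length := by
  induction p generalizing h with
  | nil =>
    obtain ⟨r, hr⟩ := (isWeakHom_prodMk_left (G := G) _).exists_walk_length_le q
    exact ⟨r, by simpa using hr⟩
  | cons hadj p ih =>
    cases q with
    | nil =>
      obtain ⟨r, hr⟩ := (isWeakHom_prodMk_right (H := H) _).exists_walk_length_le (.cons hadj p)
      exact ⟨r, by simpa using hr⟩
    | cons hadj' q =>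
      obtain ⟨r, hr⟩ := ih q
      have hstep : (strongProd G H).Adj (_, _) (_, _) :=
        ⟨fun heq => hadj.ne (congrArg Prod.fst heq), .inr hadj, .inr hadj'⟩
      refine ⟨.cons hstep r, ?_⟩
      simpa only [Walk.length_cons, Nat.succ_max_succ] using Nat.succ_le_succ hr

theorem strongProd_dist {g g' : U} {h h' : V} (hg : G.Reachable g g') (hh : H.Reachable h h') :
    (strongProd G H).dist (g, h) (g', h') = max (G.dist g g') (H.dist h h') := by
  obtain ⟨p, hp⟩ := hg.exists_walk_length_eq_dist
  obtain ⟨q, hq⟩ := hh.exists_walk_length_eq_dist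
  obtain ⟨r, hr⟩ := exists_strongProd_walk_length_le_max p q
  have hreach : (strongProd G H).Reachable (g, h) (g', h') := ⟨r⟩
  refine le_antisymm ((dist_le r).trans (hp ▸ hq ▸ hr)) (max_le ?_ ?_)
  · exact isWeakHom_fst.dist_le hreach
  · exact isWeakHom_snd.dist_le hreach

end SimpleGraph

theorem strongProd_not_mem_closure_of_three_general {α β : Type*}
    (G : SimpleGraph α) (H : SimpleGraph β) (hG : G.Connected) (hH : H.Connected)
    (g₁ g₂ : α) (h₁ h₂ : β) (hg : g₁ ≠ g₂) (hh : h₁ ≠ h₂) :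
    (g₂, h₂) ∉ intervalSet (strongProd G H) {(g₁, h₁), (g₁, h₂), (g₂, h₁)} := by
  have hdist (x y : α) (u v : β) :
      (strongProd G H).dist (x, u) (y, v) = max (G.dist x y) (H.dist u v) :=
    strongProd_dist (hG.preconnected x y) (hH.preconnected u v)
  have ha : 0 < G.dist g₁ g₂ := hG.pos_dist_of_ne hg
  have hb : 0 < H.dist h₁ h₂ := hH.pos_dist_of_ne hh
  have hG_comm : G.dist g₂ g₁ = G.dist g₁ g₂ := dist_comm
  have hH_comm : H.dist h₂ h₁ = H.dist h₁ h₂ := dist_comm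
  intro hmem
  simp only [intervalSet, interval, Set.mem_iUnion, Set.mem_insert_iff,
    Set.mem_singleton_iff, Set.mem_ofPred_eq, exists_prop] at hmem
  obtain ⟨u, hu, v, hv, hgeod⟩ := hmem
  rcases hu with rfl | rfl | rfl <;> rcases hv with rfl | rfl | rfl <;>
    simp only [hdist, dist_self, max_self, Nat.max_zero, Nat.zero_max, hG_comm, hH_comm]
      at hgeod <;>
    omega

theorem strongProd_not_mem_closure_of_three {α β : Type*} [Fintype α] [Fintype β]
    (G : SimpleGraph α) (H : SimpleGraph β) (hG : G.Connected) (hH : H.Connected)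
    (g₁ g₂ : α) (h₁ h₂ : β) (hg : g₁ ≠ g₂) (hh : h₁ ≠ h₂) :
    (g₂, h₂) ∉ intervalSet (strongProd G H) {(g₁, h₁), (g₁, h₂), (g₂, h₁)} :=
  strongProd_not_mem_closure_of_three_general G H hG hH g₁ g₂ h₁ h₂ hg hh
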